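/- Let X be a topological space and let E be a nonempty ambiguous subset of X (both Fσ and Gδ in X) such that E, with the subspace topology, is a perfect space (every open subset of E is Fσ in E). Then E is an H₁-retract of X. -/

import Mathlib

/-- A set is an Fσ-set if it is a countable union of closed sets. -/
def IsFsigma {X : Type*} [TopologicalSpace X] (A : Set X) : Prop :=
  ∃ F : ℕ → Set X, (∀ n, IsClosed (F n)) ∧ A = ⋃ n, F n

/-- A mapping is of the first Lebesgue class if the preimage of every open set is Fσ. -/
def LebesgueClassOne {X Y : Type*} [TopologicalSpace X] [TopologicalSpace Y] (g : X → Y) : Prop :=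
  ∀ V : Set Y, IsOpen V → IsFsigma (g ⁻¹' V)

/-- `E` is an H₁-retract of `X` if there is a first Lebesgue class map `r : X → E`
fixing the points of `E`. -/
def IsH1Retract {X : Type*} [TopologicalSpace X] (E : Set X) : Prop :=
  ∃ r : X → E, (∀ x : E, r x = x) ∧ LebesgueClassOne r

/-!
The retraction fixes `E` and collapses its complement to a point `e₀ ∈ E`. The preimage of an
open `V ⊆ E` is then `V` itself, together with `X \ E` when `e₀ ∈ V`. Since `E` is perfect, `V` is
Fσ in `E`, hence in `X` because `E` is Fσ. And `X \ E` is Fσ because `E` is Gδ.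
-/

section

variable {X : Type*}

open Classical in
noncomputable def collapseCompl (E : Set X) (e₀ : E) : X → E :=
  fun x => if h : x ∈ E then ⟨x, h⟩ else e₀

section collapseCompl

variable {E : Set X} {e₀ : E}

@[simp]
theorem collapseCompl_coe (x : E) : collapseCompl E e₀ x = x := by
  simp [collapseCompl]

theorem preimage_collapseCompl (V : Set E) :
    collapseCompl E e₀ ⁻¹' V = Subtype.val '' V ∪ {x | x ∉ E ∧ e₀ ∈ V} := by
  ext x
  by_cases hx : x ∈ E <;> simp [collapseCompl, hx]

end collapseCompl

variable [TopologicalSpace X]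

theorem IsClosed.isFsigma {A : Set X} (hA : IsClosed A) : IsFsigma A :=
  ⟨fun _ => A, fun _ => hA, (Set.iUnion_const A).symm⟩

theorem IsFsigma.iUnion {A : ℕ → Set X} (h : ∀ n, IsFsigma (A n)) : IsFsigma (⋃ n, A n) := by
  choose F hF hA using h
  refine ⟨fun k => F k.unpair.1 k.unpair.2, fun k => hF _ _, ?_⟩
  rw [Set.iUnion_unpair fun n m => F n m, Set.iUnion_congr hA]

theorem IsFsigma.union {A B : Set X} (hA : IsFsigma A) (hB : IsFsigma B) : IsFsigma (A ∪ B) := by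
  obtain ⟨F, hF, rfl⟩ := hA
  obtain ⟨G, hG, rfl⟩ := hB
  exact ⟨fun n => F n ∪ G n, fun n => (hF n).union (hG n), (Set.iUnion_union_distrib F G).symm⟩

theorem IsFsigma.inter_isClosed {A C : Set X} (hA : IsFsigma A) (hC : IsClosed C) :
    IsFsigma (A ∩ C) := by
  obtain ⟨F, hF, rfl⟩ := hA
  exact ⟨fun n => F n ∩ C, fun n => (hF n).inter hC, Set.iUnion_inter C F⟩

theorem IsFsigma.image_val {E : Set X} (hE : IsFsigma E) {A : Set E} (hA : IsFsigma A) :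
    IsFsigma (Subtype.val '' A) := by
  obtain ⟨G, hG, rfl⟩ := hA
  rw [Set.image_iUnion]
  refine IsFsigma.iUnion fun n => ?_
  obtain ⟨C, hC, hGC⟩ := isClosed_induced_iff.1 (hG n)
  rw [← hGC, Subtype.image_preimage_coe]
  exact hE.inter_isClosed hC

theorem IsGδ.isFsigma_compl {E : Set X} (hE : IsGδ E) : IsFsigma Eᶜ := by
  obtain ⟨U, hU, rfl⟩ := hE.eq_iInter_nat
  exact ⟨fun n => (U n)ᶜ, fun n => (hU n).isClosed_compl, Set.compl_iInter U⟩

theorem lebesgueClassOne_collapseCompl {E : Set X} {e₀ : E} (hE : IsFsigma E) (hEc : IsFsigma Eᶜ)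
    (hperf : ∀ V : Set E, IsOpen V → IsFsigma V) : LebesgueClassOne (collapseCompl E e₀) := by
  intro V hV
  rw [preimage_collapseCompl]
  refine (hE.image_val (hperf V hV)).union ?_
  by_cases h : e₀ ∈ V
  · simpa [h, Set.compl_def] using hEc
  · simpa [h] using isClosed_empty.isFsigma

end

/-- A nonempty perfect ambiguous subset of a topological space is an H₁-retract. -/
theorem isH1Retract_of_perfect_ambiguous {X : Type*} [TopologicalSpace X] {E : Set X}
    (hne : E.Nonempty) (hFσ : IsFsigma E) (hGδ : IsGδ E)
    (hperf : ∀ V : Set E, IsOpen V → IsFsigma V) :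
    IsH1Retract E := by
  obtain ⟨e₀, he₀⟩ := hne
  exact ⟨collapseCompl E ⟨e₀, he₀⟩, collapseCompl_coe,
    lebesgueClassOne_collapseCompl hFσ hGδ.isFsigma_compl hperf⟩
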